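/- arXiv:2403.17463 — 2 statements merged into one kernel-verified Lean document; each statement's English description precedes it below -/
import Mathlib

section
/- Let J = [a, b] be a nonempty compact interval of ℝ, and suppose u_T is left continuous, takes values in J, and satisfies the Oleinik condition (O) at T. Then the function U_o^♯(x) := sup { U_o(x) : U_o ∈ II_T(U_T; J) } is finite everywhere and for all x₁ < x₂ satisfies a·(x₂ − x₁) ≤ U_o^♯(x₂) − U_o^♯(x₁) ≤ b·(x₂ − x₁); in particular U_o^♯ is Lipschitz with a.e. derivative in J. -/
open Filter MeasureTheory

/-- Condition (f): `f` is `C²`, strongly convex (`f'' > 0` everywhere), and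
`f' → ∓∞` at `∓∞`. -/
def CondF (f : ℝ → ℝ) : Prop :=
  ContDiff ℝ 2 f ∧ (∀ x, 0 < deriv (deriv f) x) ∧
    Tendsto (deriv f) atBot atBot ∧ Tendsto (deriv f) atTop atTop

/-- The Legendre transform `f*(y) = sup_x (y·x − f(x))`. -/
noncomputable def legendre (f : ℝ → ℝ) (y : ℝ) : ℝ :=
  sSup (Set.range fun x => y * x - f x)

/-- `U_T(x) = ∫_{x̌}^x u_T`. -/
noncomputable def UT (uT : ℝ → ℝ) (xc x : ℝ) : ℝ := ∫ ξ in xc..x, uT ξ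

/-- `U_o^♭(x) = sup_ξ [U_T(ξ) − T f*((ξ−x)/T)]`. -/
noncomputable def Uflat (f : ℝ → ℝ) (T : ℝ) (uT : ℝ → ℝ) (xc x : ℝ) : ℝ :=
  sSup (Set.range fun ξ => UT uT xc ξ - T * legendre f ((ξ - x) / T))

/-- `M(x)`: the set of maximizers in the definition of `U_o^♭(x)`. -/
def MSet (f : ℝ → ℝ) (T : ℝ) (uT : ℝ → ℝ) (xc x : ℝ) : Set ℝ :=
  {ξ | UT uT xc ξ = Uflat f T uT xc x + T * legendre f ((ξ - x) / T)}

/-- Oleinik condition (O) at `T`. -/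
def Oleinik (f : ℝ → ℝ) (T : ℝ) (uT : ℝ → ℝ) : Prop :=
  ∀ x Δ : ℝ, 0 < Δ → deriv f (uT (x + Δ)) - deriv f (uT x) ≤ Δ / T

/-- The Hopf–Lax operator at time `T`: `(S_T U)(x) = inf_ξ [U(ξ) + T f*((x−ξ)/T)]`. -/
noncomputable def HopfLax (f : ℝ → ℝ) (T : ℝ) (U : ℝ → ℝ) (x : ℝ) : ℝ :=
  sInf (Set.range fun ξ => U ξ + T * legendre f ((x - ξ) / T))

/-- Left continuity of a real function. -/
def LeftCts (u : ℝ → ℝ) : Prop :=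
  ∀ x, Tendsto u (nhdsWithin x (Set.Iio x)) (nhds (u x))

/-- `II_T(U_T; J)`: Lipschitz functions with a.e. derivative in `J` evolving into `U_T`
under the Hopf–Lax semigroup. -/
def IIT (f : ℝ → ℝ) (T : ℝ) (uT : ℝ → ℝ) (xc : ℝ) (J : Set ℝ) : Set (ℝ → ℝ) :=
  {U | (∃ K, LipschitzWith K U) ∧ (∀ᵐ x ∂volume, deriv U x ∈ J) ∧
    ∀ x, HopfLax f T U x = UT uT xc x}

/-- `U_o^♯(x) = sup { U(x) : U ∈ II_T(U_T; J) }`. -/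
noncomputable def Usharp (f : ℝ → ℝ) (T : ℝ) (uT : ℝ → ℝ) (xc : ℝ) (J : Set ℝ) (x : ℝ) : ℝ :=
  sSup ((fun U : ℝ → ℝ => U x) '' IIT f T uT xc J)

/-!
Write `f*` for `legendre f` and `g = (f')⁻¹`; then `f*` is differentiable with `(f*)' = g`.
The backward sup-convolution `U♭ = Uflat` is a supremum of translates of `U_T` minus constants,
so it inherits the slope bounds `a ≤ U_T' ≤ b`. By the Oleinik condition, `u_T ≤ g((· − η)/T)`
to the right of `x` and `≥` to its left, for the characteristic foot `η = x − T f'(u_T(x))`;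
integrating from `x` gives `U_T(ξ) − U_T(x) ≤ T f*((ξ − η)/T) − T f*((x − η)/T)`, that is
`U♭(η) + T f*((x − η)/T) ≤ U_T(x)`, which is the half of `S_T U♭ = U_T` that is not automatic.
Hence `II_T(U_T; J)` is nonempty.

A Lipschitz function with a.e. derivative in `[a, b]` has all its difference quotients in
`[a, b]` (fundamental theorem of calculus for absolutely continuous functions), and by
superlinearity of `f*` every `U ∈ II_T(U_T; J)` satisfies `U ≤ S_T U + C = U_T + C` with `C`
depending only on `a, b, T, f`. So `U_o^♯` is a finite supremum of functions with difference
quotients in `[a, b]`, and inherits them.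
-/

open Set Topology
open scoped NNReal

def HasSlopesIn (W : ℝ → ℝ) (a b : ℝ) : Prop :=
  ∀ ⦃x y⦄, x ≤ y → a * (y - x) ≤ W y - W x ∧ W y - W x ≤ b * (y - x)

namespace HasSlopesIn

variable {W : ℝ → ℝ} {a b : ℝ}

lemma lipschitzWith (h : HasSlopesIn W a b) : LipschitzWith (max |a| |b|).toNNReal W := by
  refine LipschitzWith.of_dist_le_mul fun x y => ?_
  wlog hxy : x ≤ y generalizing x y
  · rw [dist_comm, dist_comm x]
    exact this y x (le_of_not_ge hxy)
  rw [Real.dist_eq, Real.dist_eq, Real.coe_toNNReal _ (by positivity), abs_sub_comm,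
    abs_sub_comm x, abs_of_nonneg (sub_nonneg.2 hxy), abs_le]
  have ha : -max |a| |b| ≤ a := (neg_le_neg (le_max_left _ _)).trans (neg_abs_le a)
  have hb : b ≤ max |a| |b| := (le_abs_self b).trans (le_max_right _ _)
  have hyx : 0 ≤ y - x := sub_nonneg.2 hxy
  obtain ⟨h₁, h₂⟩ := h hxy
  constructor <;> nlinarith

lemma ae_deriv_mem (h : HasSlopesIn W a b) : ∀ᵐ x, deriv W x ∈ Icc a b := by
  filter_upwards [h.lipschitzWith.ae_differentiableAt] with x hx
  have hslope : Tendsto (slope W x) (𝓝[>] x) (𝓝 (deriv W x)) :=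
    (hasDerivAt_iff_tendsto_slope.1 hx.hasDerivAt).mono_left
      (nhdsWithin_mono x fun y hy => ne_of_gt hy)
  refine isClosed_Icc.mem_of_tendsto hslope ?_
  filter_upwards [self_mem_nhdsWithin] with y (hy : x < y)
  obtain ⟨h₁, h₂⟩ := h hy.le
  rw [slope_def_field]
  exact ⟨(le_div_iff₀ (sub_pos.2 hy)).2 h₁, (div_le_iff₀ (sub_pos.2 hy)).2 h₂⟩

lemma of_ae_deriv_mem {K : ℝ≥0} (hW : LipschitzWith K W) (h : ∀ᵐ x, deriv W x ∈ Icc a b) :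
    HasSlopesIn W a b := by
  intro x y hxy
  have hac := (hW.lipschitzOnWith (s := uIcc x y)).absolutelyContinuousOnInterval
  rw [← hac.integral_deriv_eq_sub]
  constructor
  · simpa [mul_comm] using intervalIntegral.integral_mono_ae hxy intervalIntegrable_const
      hac.intervalIntegrable_deriv (by filter_upwards [h] with z hz using hz.1)
  · simpa [mul_comm] using intervalIntegral.integral_mono_ae hxy hac.intervalIntegrable_deriv
      intervalIntegrable_const (by filter_upwards [h] with z hz using hz.2)

lemma comp_add_sub (h : HasSlopesIn W a b) (w c : ℝ) :
    HasSlopesIn (fun x => W (x + w) - c) a b := by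
  intro x y hxy
  have := h (x := x + w) (y := y + w) (by linarith)
  simp only [add_sub_add_right_eq_sub] at this
  constructor <;> linarith [this.1, this.2]

lemma iSup {ι : Type*} [Nonempty ι] {F : ι → ℝ → ℝ} (hF : ∀ i, HasSlopesIn (F i) a b)
    (hbdd : ∀ x, BddAbove (range fun i => F i x)) : HasSlopesIn (fun x => ⨆ i, F i x) a b := by
  intro x y hxy
  constructor
  · have : ⨆ i, F i x ≤ (⨆ i, F i y) - a * (y - x) := ciSup_le fun i => by
      linarith [(hF i hxy).1, le_ciSup (hbdd y) i]
    linarith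
  · have : ⨆ i, F i y ≤ (⨆ i, F i x) + b * (y - x) := ciSup_le fun i => by
      linarith [(hF i hxy).2, le_ciSup (hbdd x) i]
    linarith

end HasSlopesIn

lemma hasSlopesIn_integral {u : ℝ → ℝ} {a b : ℝ} (hu : ∀ s t, IntervalIntegrable u volume s t)
    (huJ : ∀ x, u x ∈ Icc a b) (c : ℝ) : HasSlopesIn (fun x => ∫ s in c..x, u s) a b := by
  intro x y hxy
  simp only [intervalIntegral.integral_interval_sub_left (hu c y) (hu c x)]
  constructor
  · simpa [mul_comm] using intervalIntegral.integral_mono_on hxy intervalIntegrable_const (hu x y)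
      fun s _ => (huJ s).1
  · simpa [mul_comm] using intervalIntegral.integral_mono_on hxy (hu x y) intervalIntegrable_const
      fun s _ => (huJ s).2

lemma hasDerivAt_of_forall_add_mul_sub_le {F g : ℝ → ℝ} (hsub : ∀ z y, F z + g z * (y - z) ≤ F y)
    {z : ℝ} (hg : ContinuousAt g z) : HasDerivAt F (g z) z := by
  rw [hasDerivAt_iff_tendsto_slope]
  have hmin : Tendsto (fun y => min (g z) (g y)) (𝓝 z) (𝓝 (g z)) := by
    convert tendsto_const_nhds.min hg.tendsto
    rw [min_self]
  have hmax : Tendsto (fun y => max (g z) (g y)) (𝓝 z) (𝓝 (g z)) := by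
    convert tendsto_const_nhds.max hg.tendsto
    rw [max_self]
  have hbetween : ∀ y ≠ z, min (g z) (g y) ≤ slope F z y ∧ slope F z y ≤ max (g z) (g y) := by
    intro y hy
    have h₁ := hsub z y
    have h₂ := hsub y z
    rw [slope_def_field]
    rcases hy.lt_or_gt with h | h
    · exact ⟨(min_le_right _ _).trans ((le_div_iff_of_neg (sub_neg.2 h)).2 (by linarith)),
        ((div_le_iff_of_neg (sub_neg.2 h)).2 (by linarith)).trans (le_max_left _ _)⟩
    · exact ⟨(min_le_left _ _).trans ((le_div_iff₀ (sub_pos.2 h)).2 (by linarith)),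
        ((div_le_iff₀ (sub_pos.2 h)).2 (by linarith)).trans (le_max_right _ _)⟩
  refine tendsto_of_tendsto_of_tendsto_of_le_of_le' (hmin.mono_left nhdsWithin_le_nhds)
    (hmax.mono_left nhdsWithin_le_nhds) ?_ ?_ <;>
    filter_upwards [self_mem_nhdsWithin] with y hy
  exacts [(hbetween y hy).1, (hbetween y hy).2]

lemma CondF.exists_orderIso_hasDerivAt {f : ℝ → ℝ} (hf : CondF f) :
    ∃ e : ℝ ≃o ℝ, ∀ x, HasDerivAt f (e x) x := by
  obtain ⟨hC2, hpos, hbot, htop⟩ := hf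
  have hsurj := (hC2.continuous_deriv (by norm_num)).surjective htop hbot
  exact ⟨(strictMono_of_deriv_pos hpos).orderIsoOfSurjective _ hsurj,
    fun x => (hC2.differentiable (by norm_num) x).hasDerivAt⟩

section Legendre

variable {f : ℝ → ℝ} {e : ℝ ≃o ℝ}

lemma add_mul_sub_le_of_hasDerivAt (hf : ∀ x, HasDerivAt f (e x) x) (x y : ℝ) :
    f y + e y * (x - y) ≤ f x := by
  have hconv : ConvexOn ℝ univ f := by
    refine MonotoneOn.convexOn_of_deriv convex_univ
      (continuous_iff_continuousAt.2 fun x => (hf x).continuousAt).continuousOn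
      (fun x _ => (hf x).differentiableAt.differentiableWithinAt) ?_
    rw [funext fun x => (hf x).deriv]
    exact e.monotone.monotoneOn _
  rcases lt_trichotomy x y with h | rfl | h
  · have := hconv.slope_le_of_hasDerivAt trivial trivial h (hf y)
    rw [slope_def_field, div_le_iff₀ (sub_pos.2 h)] at this
    linarith
  · simp
  · have := hconv.le_slope_of_hasDerivAt trivial trivial h (hf y)
    rw [slope_def_field, le_div_iff₀ (sub_pos.2 h)] at this
    linarith

lemma isGreatest_legendre (hf : ∀ x, HasDerivAt f (e x) x) (y : ℝ) :
    IsGreatest (range fun x => y * x - f x) (y * e.symm y - f (e.symm y)) := by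
  refine ⟨⟨_, rfl⟩, ?_⟩
  rintro _ ⟨x, rfl⟩
  have := add_mul_sub_le_of_hasDerivAt hf x (e.symm y)
  rw [e.apply_symm_apply] at this
  linarith

lemma le_legendre (hf : ∀ x, HasDerivAt f (e x) x) (y x : ℝ) : y * x - f x ≤ legendre f y :=
  le_csSup (isGreatest_legendre hf y).bddAbove ⟨x, rfl⟩

lemma legendre_add_mul_sub_le (hf : ∀ x, HasDerivAt f (e x) x) (z y : ℝ) :
    legendre f z + e.symm z * (y - z) ≤ legendre f y := by
  rw [legendre, (isGreatest_legendre hf z).csSup_eq]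
  linarith [le_legendre hf y (e.symm z)]

lemma hasDerivAt_legendre (hf : ∀ x, HasDerivAt f (e x) x) (z : ℝ) :
    HasDerivAt (legendre f) (e.symm z) z :=
  hasDerivAt_of_forall_add_mul_sub_le (legendre_add_mul_sub_le hf) e.symm.continuous.continuousAt

lemma integral_legendre_deriv (hf : ∀ x, HasDerivAt f (e x) x) {T : ℝ} (hT : T ≠ 0) (η x ξ : ℝ) :
    ∫ s in x..ξ, e.symm ((s - η) / T) =
      T * legendre f ((ξ - η) / T) - T * legendre f ((x - η) / T) := by
  refine intervalIntegral.integral_eq_sub_of_hasDerivAt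
    (f := fun s => T * legendre f ((s - η) / T)) (fun s _ => ?_)
    ((e.symm.continuous.comp (f := fun s => (s - η) / T) (by fun_prop)).intervalIntegrable _ _)
  refine (((hasDerivAt_legendre hf _).comp s
    (((hasDerivAt_id s).sub_const η).div_const T)).const_mul T).congr_deriv ?_
  simp only [id]
  field_simp

lemma mul_abs_sub_le_mul_legendre (hf : ∀ x, HasDerivAt f (e x) x) {T L : ℝ} (hT : 0 < T)
    (hL : 0 ≤ L) (w : ℝ) : L * |w| - T * max (f L) (f (-L)) ≤ T * legendre f (w / T) := by
  have h₁ := mul_le_mul_of_nonneg_left (le_legendre hf (w / T) L) hT.le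
  have h₂ := mul_le_mul_of_nonneg_left (le_legendre hf (w / T) (-L)) hT.le
  have h₃ := mul_le_mul_of_nonneg_left (le_max_left (f L) (f (-L))) hT.le
  have h₄ := mul_le_mul_of_nonneg_left (le_max_right (f L) (f (-L))) hT.le
  have hw : T * (w / T) = w := mul_div_cancel₀ w hT.ne'
  rcases abs_cases w with ⟨hw', -⟩ | ⟨hw', -⟩ <;> rw [hw'] <;> nlinarith

lemma sub_le_legendre_of_lipschitzWith (hf : ∀ x, HasDerivAt f (e x) x) {V : ℝ → ℝ} {K : ℝ≥0}
    (hV : LipschitzWith K V) {T : ℝ} (hT : 0 < T) (p q : ℝ) :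
    V p - V q ≤ T * legendre f ((p - q) / T) + T * max (f K) (f (-K)) := by
  have hVpq : V p - V q ≤ K * |p - q| := by
    simpa [Real.dist_eq] using (le_abs_self _).trans (hV.dist_le_mul p q)
  have := mul_abs_sub_le_mul_legendre hf hT K.coe_nonneg (p - q)
  linarith

lemma le_hopfLax_add {U : ℝ → ℝ} (hf : ∀ x, HasDerivAt f (e x) x) {T : ℝ}
    (hT : 0 < T) {K : ℝ≥0} (hU : LipschitzWith K U) (x : ℝ) :
    U x ≤ HopfLax f T U x + T * max (f K) (f (-K)) := by
  have : U x - T * max (f K) (f (-K)) ≤ HopfLax f T U x :=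
    le_csInf (range_nonempty _) (forall_mem_range.2 fun ξ => by
      linarith [sub_le_legendre_of_lipschitzWith hf hU hT x ξ])
  linarith

end Legendre

lemma Oleinik.deriv_le {f uT : ℝ → ℝ} {T : ℝ} (hO : Oleinik f T uT) {x y : ℝ} (hxy : x ≤ y) :
    deriv f (uT y) ≤ deriv f (uT x) + (y - x) / T := by
  rcases hxy.eq_or_lt with rfl | h
  · simp
  · have := hO x (y - x) (sub_pos.2 h)
    rw [add_sub_cancel] at this
    linarith

lemma intervalIntegral.integral_le_of_le_right_of_ge_left {u φ : ℝ → ℝ} {x : ℝ}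
    (hu : ∀ s t, IntervalIntegrable u volume s t) (hφ : ∀ s t, IntervalIntegrable φ volume s t)
    (hright : ∀ s, x ≤ s → u s ≤ φ s) (hleft : ∀ s, s ≤ x → φ s ≤ u s) (ξ : ℝ) :
    ∫ s in x..ξ, u s ≤ ∫ s in x..ξ, φ s := by
  rcases le_total x ξ with h | h
  · exact intervalIntegral.integral_mono_on h (hu x ξ) (hφ x ξ) fun s hs => hright s hs.1
  · rw [intervalIntegral.integral_symm ξ x, intervalIntegral.integral_symm ξ x, neg_le_neg_iff]
    exact intervalIntegral.integral_mono_on h (hφ ξ x) (hu ξ x) fun s hs => hleft s hs.2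

section Characteristics

variable {f uT : ℝ → ℝ} {e : ℝ ≃o ℝ} {T a b : ℝ}

lemma intervalIntegrable_of_mem_Icc (huT : Measurable uT) (huTJ : ∀ x, uT x ∈ Icc a b)
    (s t : ℝ) : IntervalIntegrable uT volume s t :=
  (intervalIntegrable_const (c := max |a| |b|)).mono_fun' huT.aestronglyMeasurable
    (ae_of_all _ fun x => abs_le_max_abs_abs (huTJ x).1 (huTJ x).2)

lemma UT_hasSlopesIn (huT : Measurable uT) (huTJ : ∀ x, uT x ∈ Icc a b) (xc : ℝ) :
    HasSlopesIn (UT uT xc) a b :=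
  hasSlopesIn_integral (intervalIntegrable_of_mem_Icc huT huTJ) huTJ xc

lemma bddAbove_range_UT_sub_legendre (hf : ∀ x, HasDerivAt f (e x) x) (hT : 0 < T)
    (huT : Measurable uT) (huTJ : ∀ x, uT x ∈ Icc a b) (xc x : ℝ) :
    BddAbove (range fun ξ => UT uT xc ξ - T * legendre f ((ξ - x) / T)) := by
  refine ⟨UT uT xc x + T * max (f (max |a| |b|).toNNReal) (f (-(max |a| |b|).toNNReal)),
    forall_mem_range.2 fun ξ => ?_⟩
  have := sub_le_legendre_of_lipschitzWith hf (UT_hasSlopesIn huT huTJ xc).lipschitzWith hT ξ x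
  linarith

lemma Uflat_hasSlopesIn (hf : ∀ x, HasDerivAt f (e x) x) (hT : 0 < T) (huT : Measurable uT)
    (huTJ : ∀ x, uT x ∈ Icc a b) (xc : ℝ) : HasSlopesIn (Uflat f T uT xc) a b := by
  have hshift : Uflat f T uT xc = fun x => ⨆ w, (UT uT xc (x + w) - T * legendre f (w / T)) :=
    funext fun x => ((Equiv.addLeft x).iSup_congr fun w => by simp).symm
  rw [hshift]
  refine HasSlopesIn.iSup (fun w => (UT_hasSlopesIn huT huTJ xc).comp_add_sub w _) fun x => ?_
  obtain ⟨C, hC⟩ := bddAbove_range_UT_sub_legendre hf hT huT huTJ xc x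
  exact ⟨C, forall_mem_range.2 fun w => by simpa using hC ⟨x + w, rfl⟩⟩

lemma Oleinik.exists_UT_sub_le (hO : Oleinik f T uT) (hf : ∀ x, HasDerivAt f (e x) x)
    (hT : 0 < T) (huT : Measurable uT) (huTJ : ∀ x, uT x ∈ Icc a b) (xc x : ℝ) :
    ∃ η, ∀ ξ, UT uT xc ξ - UT uT xc x ≤
      T * legendre f ((ξ - η) / T) - T * legendre f ((x - η) / T) := by
  have hderiv : deriv f = e := funext fun x => (hf x).deriv
  have hui := intervalIntegrable_of_mem_Icc huT huTJ
  refine ⟨x - T * e (uT x), fun ξ => ?_⟩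
  have harg : ∀ s, (s - (x - T * e (uT x))) / T = e (uT x) + (s - x) / T := fun s => by
    field_simp
    ring
  have hφ : Continuous fun s => e.symm ((s - (x - T * e (uT x))) / T) :=
    e.symm.continuous.comp (by fun_prop)
  rw [← integral_legendre_deriv hf hT.ne', UT, UT,
    intervalIntegral.integral_interval_sub_left (hui xc ξ) (hui xc x)]
  refine intervalIntegral.integral_le_of_le_right_of_ge_left hui hφ.intervalIntegrable
    (fun s hs => ?_) (fun s hs => ?_) ξ
  · rw [harg, e.le_symm_apply, ← hderiv]
    exact hO.deriv_le hs
  · rw [harg, e.symm_apply_le, ← hderiv, ← neg_sub x s, neg_div]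
    linarith [hO.deriv_le hs]

lemma hopfLax_Uflat (hO : Oleinik f T uT) (hf : ∀ x, HasDerivAt f (e x) x) (hT : 0 < T)
    (huT : Measurable uT) (huTJ : ∀ x, uT x ∈ Icc a b) (xc : ℝ) :
    HopfLax f T (Uflat f T uT xc) = UT uT xc := by
  funext x
  have hle : ∀ η, UT uT xc x ≤ Uflat f T uT xc η + T * legendre f ((x - η) / T) := fun η => by
    have : UT uT xc x - T * legendre f ((x - η) / T) ≤ Uflat f T uT xc η :=
      le_csSup (bddAbove_range_UT_sub_legendre hf hT huT huTJ xc η) ⟨x, rfl⟩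
    linarith
  obtain ⟨η, hη⟩ := hO.exists_UT_sub_le hf hT huT huTJ xc x
  have hUη : Uflat f T uT xc η ≤ UT uT xc x - T * legendre f ((x - η) / T) :=
    csSup_le (range_nonempty _) (forall_mem_range.2 fun ξ => by linarith [hη ξ])
  exact le_antisymm ((csInf_le ⟨_, forall_mem_range.2 hle⟩ ⟨η, rfl⟩).trans (by linarith))
    (le_csInf (range_nonempty _) (forall_mem_range.2 hle))

lemma Uflat_mem_IIT (hO : Oleinik f T uT) (hf : ∀ x, HasDerivAt f (e x) x) (hT : 0 < T)
    (huT : Measurable uT) (huTJ : ∀ x, uT x ∈ Icc a b) (xc : ℝ) :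
    Uflat f T uT xc ∈ IIT f T uT xc (Icc a b) :=
  have h := Uflat_hasSlopesIn hf hT huT huTJ xc
  ⟨⟨_, h.lipschitzWith⟩, h.ae_deriv_mem, congrFun (hopfLax_Uflat hO hf hT huT huTJ xc)⟩

end Characteristics

theorem stmt_15_general (f : ℝ → ℝ) (hf : CondF f) (T : ℝ) (hT : 0 < T)
    (a b : ℝ)
    (uT : ℝ → ℝ) (huT : Measurable uT)
    (huTJ : ∀ x, uT x ∈ Set.Icc a b) (hO : Oleinik f T uT) (xc : ℝ) :
    (∀ x : ℝ, ((fun U : ℝ → ℝ => U x) '' IIT f T uT xc (Set.Icc a b)).Nonempty ∧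
      BddAbove ((fun U : ℝ → ℝ => U x) '' IIT f T uT xc (Set.Icc a b))) ∧
    (∀ x₁ x₂ : ℝ, x₁ < x₂ →
      a * (x₂ - x₁) ≤ Usharp f T uT xc (Set.Icc a b) x₂ - Usharp f T uT xc (Set.Icc a b) x₁ ∧
      Usharp f T uT xc (Set.Icc a b) x₂ - Usharp f T uT xc (Set.Icc a b) x₁ ≤ b * (x₂ - x₁)) ∧
    (∃ K, LipschitzWith K (Usharp f T uT xc (Set.Icc a b))) ∧
    (∀ᵐ x ∂volume, deriv (Usharp f T uT xc (Set.Icc a b)) x ∈ Set.Icc a b) := by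
  obtain ⟨e, he⟩ := hf.exists_orderIso_hasDerivAt
  set S := IIT f T uT xc (Icc a b)
  have hUflat : Uflat f T uT xc ∈ S := Uflat_mem_IIT hO he hT huT huTJ xc
  have hslopes : ∀ U ∈ S, HasSlopesIn U a b := fun U hU =>
    hU.1.elim fun _ hK => .of_ae_deriv_mem hK hU.2.1
  have hbdd : ∀ x, BddAbove ((fun U : ℝ → ℝ => U x) '' S) := fun x =>
    ⟨_, forall_mem_image.2 fun U hU => by
      simpa only [hU.2.2 x] using le_hopfLax_add he hT (hslopes U hU).lipschitzWith x⟩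
  have hsharp : HasSlopesIn (Usharp f T uT xc (Icc a b)) a b := by
    have : Nonempty S := ⟨⟨_, hUflat⟩⟩
    have hrepr : Usharp f T uT xc (Icc a b) = fun x => ⨆ U : S, (U : ℝ → ℝ) x :=
      funext fun x => sSup_image'
    rw [hrepr]
    refine HasSlopesIn.iSup (fun U : S => hslopes U U.2) fun x => ?_
    simpa only [image_eq_range] using hbdd x
  exact ⟨fun x => ⟨⟨_, _, hUflat, rfl⟩, hbdd x⟩, fun _ _ h => hsharp h.le,
    ⟨_, hsharp.lipschitzWith⟩, hsharp.ae_deriv_mem⟩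

theorem stmt_15 (f : ℝ → ℝ) (hf : CondF f) (T : ℝ) (hT : 0 < T)
    (a b : ℝ) (hab : a ≤ b)
    (uT : ℝ → ℝ) (huT : Measurable uT)
    (hlc : LeftCts uT) (huTJ : ∀ x, uT x ∈ Set.Icc a b) (hO : Oleinik f T uT) (xc : ℝ) :
    (∀ x : ℝ, ((fun U : ℝ → ℝ => U x) '' IIT f T uT xc (Set.Icc a b)).Nonempty ∧
      BddAbove ((fun U : ℝ → ℝ => U x) '' IIT f T uT xc (Set.Icc a b))) ∧
    (∀ x₁ x₂ : ℝ, x₁ < x₂ →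
      a * (x₂ - x₁) ≤ Usharp f T uT xc (Set.Icc a b) x₂ - Usharp f T uT xc (Set.Icc a b) x₁ ∧
      Usharp f T uT xc (Set.Icc a b) x₂ - Usharp f T uT xc (Set.Icc a b) x₁ ≤ b * (x₂ - x₁)) ∧
    (∃ K, LipschitzWith K (Usharp f T uT xc (Set.Icc a b))) ∧
    (∀ᵐ x ∂volume, deriv (Usharp f T uT xc (Set.Icc a b)) x ∈ Set.Icc a b) :=
  stmt_15_general f hf T hT a b uT huT huTJ hO xc
end

section
/- (Theorem 1, compactness part, Hopf–Lax form.) Let J be a nonempty compact interval of ℝ, and suppose u_T is left continuous, takes values in J, and satisfies the Oleinik condition (O) at T. Then the set II_T(U_T; J) is convex, and it is compact with respect to the topology of uniform convergence on compact subsets of ℝ: every sequence in II_T(U_T; J) admits a subsequence converging uniformly on every compact subset of ℝ to an element of II_T(U_T; J). -/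
open Filter MeasureTheory

/-!
Let `S` be the set of points where `U_T' = u_T`; by Lebesgue's differentiation theorem it has full
measure, so it is dense. If `S_T U = U_T` and `y ∈ S`, the first-order condition at a minimiser `ξ`
of `ξ ↦ U(ξ) + T f*((y - ξ)/T)` reads `(f*)'((y - ξ)/T) = u_T(y)`, so `ξ = y - T f'(u_T(y))`
whatever `U` is. Conversely `S_T U` is Lipschitz, so `S_T U = U_T` on `S` suffices. Thus
`II_T(U_T; J)` is cut out by the slope condition and by affine inequalities and equations in `U`,
hence is convex and closed under pointwise limits. Its elements are equi-Lipschitz and agree at the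
foot of one backward characteristic, so a diagonal argument over the rationals and equicontinuity
extract a locally uniformly convergent subsequence.
-/
open Set Topology

namespace CondF

variable {f : ℝ → ℝ}

theorem differentiable (hf : CondF f) : Differentiable ℝ f :=
  hf.1.differentiable (by norm_num)

theorem hasDerivAt_deriv (hf : CondF f) (x : ℝ) :
    HasDerivAt (deriv f) (deriv (deriv f) x) x :=
  ((hf.1.iterate_deriv' 1 1).differentiable (by norm_num) x).hasDerivAt

theorem strictMono_deriv (hf : CondF f) : StrictMono (deriv f) :=
  strictMono_of_deriv_pos hf.2.1

/-- `f'` as an order isomorphism of `ℝ`; its inverse is the derivative of `f*`. -/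
noncomputable def derivIso (hf : CondF f) : ℝ ≃o ℝ :=
  hf.strictMono_deriv.orderIsoOfSurjective _ <|
    (continuous_iff_continuousAt.2 fun x => (hf.hasDerivAt_deriv x).continuousAt).surjective
      hf.2.2.2 hf.2.2.1

@[simp]
theorem deriv_derivIso_symm (hf : CondF f) (y : ℝ) : deriv f (hf.derivIso.symm y) = y :=
  hf.derivIso.apply_symm_apply y

theorem isMinOn_sub_mul (hf : CondF f) (y : ℝ) :
    IsMinOn (fun x => f x - y * x) univ (hf.derivIso.symm y) := by
  have hd : ∀ x, HasDerivAt (fun x => f x - y * x) (deriv f x - y) x := fun x =>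
    (hf.differentiable x).hasDerivAt.sub (by simpa using (hasDerivAt_id x).const_mul y)
  have hconv : ConvexOn ℝ univ (fun x => f x - y * x) :=
    Monotone.convexOn_univ_of_deriv (fun x => (hd x).differentiableAt) <| by
      rw [funext fun x => (hd x).deriv]
      exact fun a b hab => sub_le_sub_right (hf.strictMono_deriv.monotone hab) y
  refine hconv.isMinOn_of_rightDeriv_eq_zero (by simp) ?_
  rw [(hd _).hasDerivWithinAt.derivWithin (uniqueDiffWithinAt_Ioi _)]
  simp

theorem isGreatest_legendre (hf : CondF f) (y : ℝ) :
    IsGreatest (range fun x => y * x - f x)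
      (y * hf.derivIso.symm y - f (hf.derivIso.symm y)) := by
  refine ⟨⟨_, rfl⟩, ?_⟩
  rintro _ ⟨x, rfl⟩
  have := hf.isMinOn_sub_mul y (mem_univ x)
  simp only [mem_ofPred_eq] at this
  linarith

theorem legendre_eq (hf : CondF f) (y : ℝ) :
    legendre f y = y * hf.derivIso.symm y - f (hf.derivIso.symm y) :=
  (hf.isGreatest_legendre y).csSup_eq

theorem mul_sub_le_legendre (hf : CondF f) (y x : ℝ) : y * x - f x ≤ legendre f y :=
  le_csSup (hf.isGreatest_legendre y).bddAbove ⟨x, rfl⟩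

theorem hasDerivAt_derivIso_symm (hf : CondF f) (y : ℝ) :
    HasDerivAt hf.derivIso.symm (deriv (deriv f) (hf.derivIso.symm y))⁻¹ y :=
  HasDerivAt.of_local_left_inverse hf.derivIso.symm.continuous.continuousAt
    (hf.hasDerivAt_deriv _) (hf.2.1 _).ne' (Eventually.of_forall hf.deriv_derivIso_symm)

theorem hasDerivAt_legendre (hf : CondF f) (y : ℝ) :
    HasDerivAt (legendre f) (hf.derivIso.symm y) y := by
  rw [funext hf.legendre_eq]
  have hg := hf.hasDerivAt_derivIso_symm y
  refine (((hasDerivAt_id y).mul hg).sub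
    ((hf.differentiable _).hasDerivAt.comp y hg)).congr_deriv ?_
  simp

theorem continuous_legendre (hf : CondF f) : Continuous (legendre f) :=
  continuous_iff_continuousAt.2 fun y => (hf.hasDerivAt_legendre y).continuousAt

theorem abs_mul_sub_le_legendre (hf : CondF f) (R s : ℝ) :
    R * |s| - max (f R) (f (-R)) ≤ legendre f s := by
  rcases le_total 0 s with h | h
  · have := hf.mul_sub_le_legendre s R
    rw [abs_of_nonneg h]
    nlinarith [le_max_left (f R) (f (-R))]
  · have := hf.mul_sub_le_legendre s (-R)
    rw [abs_of_nonpos h]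
    nlinarith [le_max_right (f R) (f (-R))]

end CondF

section HopfLax

variable {f : ℝ → ℝ} {T : ℝ} {U : ℝ → ℝ} {K : NNReal}

theorem hopfLax_coercive (hf : CondF f) (hT : 0 < T) (hU : LipschitzWith K U) (x ξ : ℝ) :
    U x + |x - ξ| - T * max (f (K + 1)) (f (-(K + 1))) ≤
      U ξ + T * legendre f ((x - ξ) / T) := by
  have hL := mul_le_mul_of_nonneg_left (hf.abs_mul_sub_le_legendre (K + 1) ((x - ξ) / T)) hT.le
  have hT' : T * ((K + 1) * (|x - ξ| / T)) = (K + 1) * |x - ξ| := by field_simp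
  rw [abs_div, abs_of_pos hT, mul_sub, hT'] at hL
  have hU' := (le_abs_self _).trans (hU.dist_le_mul x ξ)
  rw [Real.dist_eq] at hU'
  linarith

theorem exists_isLeast_hopfLax (hf : CondF f) (hT : 0 < T) (hU : LipschitzWith K U) (x : ℝ) :
    ∃ ξ, IsLeast (range fun η => U η + T * legendre f ((x - η) / T))
      (U ξ + T * legendre f ((x - ξ) / T)) := by
  have hcont : Continuous fun η => U η + T * legendre f ((x - η) / T) := by
    have := hf.continuous_legendre
    have := hU.continuous
    fun_prop
  obtain ⟨ξ, hξ⟩ := hcont.exists_forall_le' x <| by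
    filter_upwards [(isCompact_closedBall x
      (T * max (f (K + 1)) (f (-(K + 1))) + T * legendre f 0)).compl_mem_cocompact] with η hη
    rw [mem_compl_iff, Metric.mem_closedBall, not_le, Real.dist_eq, abs_sub_comm] at hη
    have := hopfLax_coercive hf hT hU x η
    simp only [sub_self, zero_div]
    linarith
  exact ⟨ξ, ⟨ξ, rfl⟩, by rintro _ ⟨η, rfl⟩; exact hξ η⟩

theorem hopfLax_le (hf : CondF f) (hT : 0 < T) (hU : LipschitzWith K U) (x ξ : ℝ) :
    HopfLax f T U x ≤ U ξ + T * legendre f ((x - ξ) / T) :=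
  csInf_le (exists_isLeast_hopfLax hf hT hU x).choose_spec.bddBelow ⟨ξ, rfl⟩

theorem lipschitzWith_hopfLax (hf : CondF f) (hT : 0 < T) (hU : LipschitzWith K U) :
    LipschitzWith K (HopfLax f T U) := by
  refine LipschitzWith.of_le_add_mul K fun x x' => ?_
  obtain ⟨ξ, hξ⟩ := exists_isLeast_hopfLax hf hT hU x'
  have hshift := (le_abs_self _).trans (hU.dist_le_mul (ξ + (x - x')) ξ)
  rw [Real.dist_eq, add_sub_cancel_left, ← Real.dist_eq] at hshift
  calc HopfLax f T U x ≤ U (ξ + (x - x')) + T * legendre f ((x - (ξ + (x - x'))) / T) :=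
        hopfLax_le hf hT hU x _
    _ ≤ U ξ + T * legendre f ((x' - ξ) / T) + K * dist x x' := by
        rw [show x - (ξ + (x - x')) = x' - ξ by ring]
        linarith
    _ = HopfLax f T U x' + K * dist x x' := by rw [HopfLax, hξ.csInf_eq]

theorem hopfLax_attained_at_characteristic (hf : CondF f) (hT : 0 < T)
    (hU : LipschitzWith K U) {V : ℝ → ℝ} (hUV : HopfLax f T U = V) {y v : ℝ}
    (hV : HasDerivAt V v y) :
    U (y - T * deriv f v) + T * legendre f (deriv f v) = V y := by
  obtain ⟨ξ, hξ⟩ := exists_isLeast_hopfLax hf hT hU y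
  have hξ' : HopfLax f T U y = U ξ + T * legendre f ((y - ξ) / T) := hξ.csInf_eq
  have hmin : IsLocalMin (fun z => U ξ + T * legendre f ((z - ξ) / T) - V z) y :=
    Eventually.of_forall fun z => by
      have := hopfLax_le hf hT hU z ξ
      rw [← hUV]
      linarith
  have hderiv : HasDerivAt (fun z => U ξ + T * legendre f ((z - ξ) / T) - V z)
      (hf.derivIso.symm ((y - ξ) / T) - v) y := by
    have hin := ((hasDerivAt_id y).sub_const ξ).div_const T
    refine ((((hf.hasDerivAt_legendre _).comp y hin).const_mul T).const_add (U ξ)).sub hV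
      |>.congr_deriv ?_
    field_simp
    rfl
  -- first-order condition at the minimiser: `(f*)'((y - ξ) / T) = v`
  have hs : (y - ξ) / T = deriv f v := by
    rw [← hf.deriv_derivIso_symm ((y - ξ) / T), sub_eq_zero.1 (hmin.hasDerivAt_eq_zero hderiv)]
  have hfoot : y - T * deriv f v = ξ := by
    rw [← hs]
    field_simp
    ring
  rw [hfoot, ← hs, ← hUV, hξ']

end HopfLax

section CharacteristicSet

variable {f : ℝ → ℝ} {T : ℝ} {V v : ℝ → ℝ}

/-- Under the hypotheses of `hopfLax_eq_iff_mem_characteristicSet`, membership is equivalent to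
`S_T W = V`, but it is visibly a closed convex condition on `W`. -/
def characteristicSet (f : ℝ → ℝ) (T : ℝ) (V v : ℝ → ℝ) : Set (ℝ → ℝ) :=
  {W | (∀ x ξ, V x ≤ W ξ + T * legendre f ((x - ξ) / T)) ∧
    ∀ y, HasDerivAt V (v y) y → W (y - T * deriv f (v y)) + T * legendre f (deriv f (v y)) = V y}

theorem convex_characteristicSet : Convex ℝ (characteristicSet f T V v) := by
  rintro W₁ ⟨hlow₁, hchar₁⟩ W₂ ⟨hlow₂, hchar₂⟩ a b ha hb hab
  refine ⟨fun x ξ => ?_, fun y hy => ?_⟩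
  · have h₁ := mul_le_mul_of_nonneg_left (hlow₁ x ξ) ha
    have h₂ := mul_le_mul_of_nonneg_left (hlow₂ x ξ) hb
    simp only [Pi.add_apply, Pi.smul_apply, smul_eq_mul]
    linear_combination h₁ + h₂ + (T * legendre f ((x - ξ) / T) - V x) * hab
  · simp only [Pi.add_apply, Pi.smul_apply, smul_eq_mul]
    linear_combination a * hchar₁ y hy + b * hchar₂ y hy +
      (V y - T * legendre f (deriv f (v y))) * hab

theorem isClosed_characteristicSet : IsClosed (characteristicSet f T V v) := by
  simp only [characteristicSet, ofPred_and, ofPred_forall]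
  refine .inter ?_ ?_
  · exact isClosed_iInter fun x => isClosed_iInter fun ξ =>
      isClosed_le continuous_const ((continuous_apply ξ).add continuous_const)
  · exact isClosed_iInter fun y => isClosed_iInter fun _ =>
      isClosed_eq ((continuous_apply _).add continuous_const) continuous_const

theorem hopfLax_eq_iff_mem_characteristicSet (hf : CondF f) (hT : 0 < T) {W : ℝ → ℝ}
    {K : NNReal} (hW : LipschitzWith K W) (hV : Continuous V)
    (hdense : Dense {y | HasDerivAt V (v y) y}) :
    HopfLax f T W = V ↔ W ∈ characteristicSet f T V v := by
  refine ⟨fun hWV => ⟨fun x ξ => hWV ▸ hopfLax_le hf hT hW x ξ,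
    fun y hy => hopfLax_attained_at_characteristic hf hT hW hWV hy⟩, ?_⟩
  rintro ⟨hlow, hchar⟩
  refine Continuous.ext_on hdense (lipschitzWith_hopfLax hf hT hW).continuous hV fun y hy => ?_
  refine le_antisymm ?_ (le_csInf (range_nonempty _) (by rintro _ ⟨ξ, rfl⟩; exact hlow y ξ))
  calc HopfLax f T W y
      ≤ W (y - T * deriv f (v y)) + T * legendre f ((y - (y - T * deriv f (v y))) / T) :=
        hopfLax_le hf hT hW y _
    _ = V y := by rw [sub_sub_cancel, mul_div_cancel_left₀ _ hT.ne', hchar y hy]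

end CharacteristicSet

section Slopes

variable {J : Set ℝ} {U : ℝ → ℝ}

def SlopesIn (J : Set ℝ) (U : ℝ → ℝ) : Prop :=
  ∀ a b, a ≠ b → slope U a b ∈ J

theorem SlopesIn.lipschitzWith {C : ℝ} (hJ : ∀ s ∈ J, |s| ≤ C) (hU : SlopesIn J U) :
    LipschitzWith C.toNNReal U := by
  refine LipschitzWith.of_dist_le_mul fun a b => ?_
  rcases eq_or_ne b a with rfl | hab
  · simp
  have := (hJ _ (hU b a hab)).trans (Real.le_coe_toNNReal C)
  rw [slope_def_field, abs_div, div_le_iff₀ (abs_pos.2 (sub_ne_zero.2 hab.symm))] at this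
  rwa [Real.dist_eq, Real.dist_eq]

theorem SlopesIn.ae_deriv_mem {C : ℝ} (hJc : IsClosed J) (hJ : ∀ s ∈ J, |s| ≤ C)
    (hU : SlopesIn J U) : ∀ᵐ x, deriv U x ∈ J := by
  filter_upwards [(hU.lipschitzWith hJ).ae_differentiableAt_real] with x hx
  exact hJc.mem_of_tendsto (hasDerivAt_iff_tendsto_slope.1 hx.hasDerivAt)
    (eventually_nhdsWithin_of_forall fun y hy => hU x y (Ne.symm hy))

theorem slopesIn_of_ae_deriv_mem (hJ : Convex ℝ J) (hJc : IsClosed J) {K : NNReal}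
    (hU : LipschitzWith K U) (hae : ∀ᵐ x, deriv U x ∈ J) : SlopesIn J U := by
  intro a b hab
  have hac := (hU.lipschitzOnWith (s := uIcc a b)).absolutelyContinuousOnInterval
  rw [slope_def_module, ← hac.integral_deriv_eq_sub, ← interval_average_eq]
  refine hJ.set_average_mem hJc ?_ (by simp [Real.volume_uIoc]) (ae_restrict_of_ae hae)
    (intervalIntegrable_iff.1 hac.intervalIntegrable_deriv)
  simp [Real.volume_uIoc, sub_eq_zero, hab.symm]

theorem convex_setOf_slopesIn (hJ : Convex ℝ J) : Convex ℝ {U | SlopesIn J U} := by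
  intro U hU V hV a b ha hb hab p q hpq
  have : slope (a • U + b • V) p q = a • slope U p q + b • slope V p q := by
    simp only [slope_def_module, Pi.add_apply, Pi.smul_apply, smul_eq_mul]
    ring
  rw [this]
  exact hJ (hU p q hpq) (hV p q hpq) ha hb hab

theorem isClosed_setOf_slopesIn (hJ : IsClosed J) : IsClosed {U : ℝ → ℝ | SlopesIn J U} := by
  simp only [SlopesIn, ofPred_forall]
  exact isClosed_iInter fun a => isClosed_iInter fun b => isClosed_iInter fun _ =>
    hJ.preimage (by simp only [slope_def_module]; fun_prop)

end Slopes

section Compactness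

variable {X α ι : Type*} [TopologicalSpace X]

theorem EquicontinuousOn.tendstoUniformlyOn_of_tendsto [UniformSpace α] {F : ι → X → α}
    {f : X → α} {l : Filter ι} {K : Set X} (hK : IsCompact K) (hF : EquicontinuousOn F K)
    (h : ∀ x ∈ K, Tendsto (F · x) l (𝓝 (f x))) : TendstoUniformlyOn F f l K := by
  have := (EquicontinuousOn.tendsto_uniformOnFun_iff_pi' (𝔖 := {K}) (by simpa using hK)
    (by simpa using hF) l f).2 (by simpa [tendsto_pi_nhds] using h)
  exact UniformOnFun.tendsto_iff_tendstoUniformlyOn.1 this K rfl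

theorem EquicontinuousAt.cauchySeq_of_dense [PseudoMetricSpace α] {F : ℕ → X → α} {x : X}
    {s : Set X} (hs : Dense s) (hF : EquicontinuousAt F x) (h : ∀ y ∈ s, CauchySeq (F · y)) :
    CauchySeq (F · x) := by
  rw [Metric.cauchySeq_iff']
  intro ε hε
  obtain ⟨y, hys, hyx⟩ :=
    hs.inter_nhds_nonempty (Metric.equicontinuousAt_iff_right.1 hF (ε / 3) (by positivity))
  obtain ⟨N, hN⟩ := Metric.cauchySeq_iff'.1 (h y hys) (ε / 3) (by positivity)
  refine ⟨N, fun n hn => ?_⟩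
  calc dist (F n x) (F N x) ≤ dist (F n x) (F n y) + dist (F n y) (F N y) + dist (F N y) (F N x) :=
        dist_triangle4 _ _ _ _
    _ < ε / 3 + ε / 3 + ε / 3 := by
        gcongr
        · exact hyx n
        · exact hN n hn
        · rw [dist_comm]; exact hyx N
    _ = ε := by ring

theorem exists_subseq_tendsto_of_lipschitzWith {u : ℕ → ℝ → ℝ} {K : NNReal}
    (hu : ∀ n, LipschitzWith K (u n)) {x₀ C : ℝ} (hC : ∀ n, |u n x₀| ≤ C) :
    ∃ U : ℝ → ℝ, ∃ φ : ℕ → ℕ, StrictMono φ ∧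
      ∀ x, Tendsto (fun n => u (φ n) x) atTop (𝓝 (U x)) := by
  have hbd : ∀ n x, |u n x| ≤ C + K * |x - x₀| := fun n x => by
    have := (hu n).dist_le_mul x x₀
    rw [Real.dist_eq, Real.dist_eq] at this
    linarith [abs_sub_abs_le_abs_sub (u n x) (u n x₀), hC n]
  obtain ⟨g, -, φ, hφ, hconv⟩ := (isCompact_univ_pi fun q : ℚ =>
      isCompact_Icc (a := -(C + K * |q - x₀|)) (b := C + K * |q - x₀|)).isSeqCompact
    (x := fun n (q : ℚ) => u n q) fun n => mem_univ_pi.2 fun q => abs_le.1 (hbd n q)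
  have hequi : Equicontinuous fun n => u (φ n) :=
    (LipschitzWith.uniformEquicontinuous _ K fun n => hu (φ n)).equicontinuous
  have hcauchy (x : ℝ) : CauchySeq fun n => u (φ n) x :=
    (hequi x).cauchySeq_of_dense Rat.denseRange_cast
      (by rintro _ ⟨q, rfl⟩; exact (tendsto_pi_nhds.1 hconv q).cauchySeq)
  choose U hU using fun x => cauchySeq_tendsto_of_complete (hcauchy x)
  exact ⟨U, φ, hφ, hU⟩

end Compactness

section IIT

variable {f : ℝ → ℝ} {T : ℝ} {J : Set ℝ} {uT : ℝ → ℝ}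

theorem Measurable.locallyIntegrable_of_abs_le {u : ℝ → ℝ} {C : ℝ} (hu : Measurable u)
    (hC : ∀ x, |u x| ≤ C) : LocallyIntegrable u :=
  locallyIntegrable_iff.2 fun _ hk => Measure.integrableOn_of_bounded hk.measure_lt_top.ne
    hu.aestronglyMeasurable (M := C) (Eventually.of_forall hC)

theorem continuous_UT (hu : LocallyIntegrable uT) (xc : ℝ) : Continuous (UT uT xc) :=
  intervalIntegral.continuous_primitive (fun _ _ => intervalIntegrable_iff.2 <|
    (hu.integrableOn_isCompact isCompact_uIcc).mono_set uIoc_subset_uIcc) xc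

theorem ae_hasDerivAt_UT (hu : LocallyIntegrable uT) (xc : ℝ) :
    ∀ᵐ y, HasDerivAt (UT uT xc) (uT y) y :=
  (_root_.LocallyIntegrable.ae_hasDerivAt_integral hu).mono fun _ hy => hy xc

theorem IIT_eq_inter_characteristicSet (hf : CondF f) (hT : 0 < T) (hJ : IsCompact J)
    (hJc : Convex ℝ J) (huT : Measurable uT) (huTJ : ∀ x, uT x ∈ J) (xc : ℝ) :
    IIT f T uT xc J = {U | SlopesIn J U} ∩ characteristicSet f T (UT uT xc) uT := by
  obtain ⟨C, hC⟩ := hJ.isBounded.exists_norm_le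
  have hloc := huT.locallyIntegrable_of_abs_le fun x => hC _ (huTJ x)
  have hiff {U : ℝ → ℝ} (hU : SlopesIn J U) := hopfLax_eq_iff_mem_characteristicSet hf hT
    (hU.lipschitzWith hC) (continuous_UT hloc xc) (Measure.dense_of_ae (ae_hasDerivAt_UT hloc xc))
  ext U
  simp only [IIT, mem_inter_iff, mem_ofPred_eq, ← funext_iff]
  constructor
  · rintro ⟨⟨K, hU⟩, hae, hHL⟩
    have hS := slopesIn_of_ae_deriv_mem hJc hJ.isClosed hU hae
    exact ⟨hS, (hiff hS).1 hHL⟩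
  · rintro ⟨hS, hchar⟩
    exact ⟨⟨_, hS.lipschitzWith hC⟩, hS.ae_deriv_mem hJ.isClosed hC, (hiff hS).2 hchar⟩

end IIT

theorem stmt_17_general (f : ℝ → ℝ) (hf : CondF f) (T : ℝ) (hT : 0 < T)
    (J : Set ℝ) (hJcp : IsCompact J) (hJoc : J.OrdConnected)
    (uT : ℝ → ℝ) (huT : Measurable uT)
    (huTJ : ∀ x, uT x ∈ J) (xc : ℝ) :
    Convex ℝ (IIT f T uT xc J) ∧
    ∀ u : ℕ → ℝ → ℝ, (∀ n, u n ∈ IIT f T uT xc J) →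
      ∃ U ∈ IIT f T uT xc J, ∃ φ : ℕ → ℕ, StrictMono φ ∧
        ∀ K : Set ℝ, IsCompact K →
          TendstoUniformlyOn (fun n => u (φ n)) U atTop K := by
  rw [IIT_eq_inter_characteristicSet hf hT hJcp hJoc.convex huT huTJ xc]
  refine ⟨(convex_setOf_slopesIn hJoc.convex).inter convex_characteristicSet, fun u hu => ?_⟩
  obtain ⟨C, hC⟩ := hJcp.isBounded.exists_norm_le
  obtain ⟨y, hy⟩ :=
    (ae_hasDerivAt_UT (huT.locallyIntegrable_of_abs_le fun x => hC _ (huTJ x)) xc).exists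
  obtain ⟨U, φ, hφ, hlim⟩ := exists_subseq_tendsto_of_lipschitzWith
    (fun n => (hu n).1.lipschitzWith hC) (x₀ := y - T * deriv f (uT y))
    (C := |UT uT xc y - T * legendre f (deriv f (uT y))|)
    fun n => by rw [eq_sub_of_add_eq ((hu n).2.2 y hy)]
  refine ⟨U, ?_, φ, hφ, fun K hK => ?_⟩
  · exact ((isClosed_setOf_slopesIn hJcp.isClosed).inter isClosed_characteristicSet)
      |>.mem_of_tendsto (tendsto_pi_nhds.2 hlim) (Eventually.of_forall fun n => hu (φ n))
  · exact (LipschitzWith.uniformEquicontinuous _ _ fun n => (hu (φ n)).1.lipschitzWith hC)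
      |>.equicontinuous.equicontinuousOn K |>.tendstoUniformlyOn_of_tendsto hK fun x _ => hlim x

theorem stmt_17 (f : ℝ → ℝ) (hf : CondF f) (T : ℝ) (hT : 0 < T)
    (J : Set ℝ) (hJne : J.Nonempty) (hJcp : IsCompact J) (hJoc : J.OrdConnected)
    (uT : ℝ → ℝ) (huT : Measurable uT)
    (hlc : LeftCts uT) (huTJ : ∀ x, uT x ∈ J) (hO : Oleinik f T uT) (xc : ℝ) :
    Convex ℝ (IIT f T uT xc J) ∧
    ∀ u : ℕ → ℝ → ℝ, (∀ n, u n ∈ IIT f T uT xc J) →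
      ∃ U ∈ IIT f T uT xc J, ∃ φ : ℕ → ℕ, StrictMono φ ∧
        ∀ K : Set ℝ, IsCompact K →
          TendstoUniformlyOn (fun n => u (φ n)) U atTop K :=
  stmt_17_general f hf T hT J hJcp hJoc uT huT huTJ xc
end
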